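/- Let n ≥ 1, μ > 0, L ≥ 0, and let f : ℝⁿ → ℝ be L-Lipschitz continuous with respect to the Euclidean norm. Then for every x ∈ ℝⁿ, |f_μ(x) − f(x)| ≤ μ L √n, where f_μ is the Gaussian smoothing of f. -/

import Mathlib

open MeasureTheory ProbabilityTheory Set
open Filter Real
open scoped NNReal ENNReal


lemma aux_hasDerivAt (x : ℝ) :
    HasDerivAt (fun x : ℝ => -(x * Real.exp (-(1/2) * x ^ 2)))
      ((x ^ 2 - 1) * Real.exp (-(1/2) * x ^ 2)) x := by
  have h1 : HasDerivAt (fun x : ℝ => -(1/2) * x ^ 2) (-(1/2) * (2 * x ^ 1)) x :=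
    (hasDerivAt_pow 2 x).const_mul _
  have h2 := h1.exp
  have h3 := ((hasDerivAt_id x).mul h2).neg
  convert h3 using 1
  · rfl
  · rfl
  · funext y; simp
  simp only [id]
  ring

lemma aux_tendsto_atTop :
    Tendsto (fun x : ℝ => x * Real.exp (-(1/2) * x ^ 2)) atTop (nhds 0) := by
  have h := rpow_mul_exp_neg_mul_sq_isLittleO_exp_neg (by norm_num : (0:ℝ) < 1/2) 1
  have hlin : Tendsto (fun x : ℝ => -(1/2) * x) atTop atBot := by
    have := (tendsto_id (α := ℝ) (x := atTop)).const_mul_atTop (by norm_num : (0:ℝ) < 1/2)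
    have := tendsto_neg_atTop_atBot.comp this
    exact this.congr (fun x => by simp [Function.comp])
  have h2 : Tendsto (fun x : ℝ => Real.exp (-(1/2) * x)) atTop (nhds 0) :=
    Real.tendsto_exp_atBot.comp hlin
  have := h.isBigO.trans_tendsto h2
  refine this.congr' ?_
  filter_upwards [eventually_ge_atTop (0:ℝ)] with x hx
  rw [Real.rpow_one]

lemma aux_tendsto_atBot :
    Tendsto (fun x : ℝ => x * Real.exp (-(1/2) * x ^ 2)) atBot (nhds 0) := by
  have h := (aux_tendsto_atTop.comp tendsto_neg_atBot_atTop).neg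
  simp only [Function.comp] at h
  have : (fun x : ℝ => -((-x) * Real.exp (-(1/2) * (-x) ^ 2)))
      = fun x : ℝ => x * Real.exp (-(1/2) * x ^ 2) := by
    funext x; ring_nf
  rw [this] at h
  simpa using h

lemma aux_int_sq : Integrable (fun x : ℝ => x ^ 2 * Real.exp (-(1/2) * x ^ 2)) := by
  have := integrable_rpow_mul_exp_neg_mul_sq (by norm_num : (0:ℝ) < 1/2)
    (by norm_num : (-1 : ℝ) < 2)
  refine this.congr (Filter.Eventually.of_forall fun x => ?_)
  simp only []
  rw [show (2:ℝ) = ((2:ℕ):ℝ) from by norm_num, Real.rpow_natCast]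

lemma aux_int_exp : Integrable (fun x : ℝ => Real.exp (-(1/2) * x ^ 2)) :=
  integrable_exp_neg_mul_sq (by norm_num)

lemma aux_int_h : Integrable (fun x : ℝ => (x ^ 2 - 1) * Real.exp (-(1/2) * x ^ 2)) := by
  have := aux_int_sq.sub aux_int_exp
  refine this.congr (Filter.Eventually.of_forall fun x => ?_)
  simp only [Pi.sub_apply]
  ring

lemma aux_integral_h_zero :
    ∫ x : ℝ, (x ^ 2 - 1) * Real.exp (-(1/2) * x ^ 2) = 0 := by
  have hIoi : ∫ x in Ioi (0:ℝ), (x ^ 2 - 1) * Real.exp (-(1/2) * x ^ 2) = 0 - 0 := by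
    have := integral_Ioi_of_hasDerivAt_of_tendsto' (a := 0)
      (fun x _ => aux_hasDerivAt x) (aux_int_h.integrableOn)
      aux_tendsto_atTop.neg
    simpa using this
  have hIic : ∫ x in Iic (0:ℝ), (x ^ 2 - 1) * Real.exp (-(1/2) * x ^ 2) = 0 - 0 := by
    have := integral_Iic_of_hasDerivAt_of_tendsto' (a := 0)
      (fun x _ => aux_hasDerivAt x) (aux_int_h.integrableOn)
      aux_tendsto_atBot.neg
    simpa using this
  have := intervalIntegral.integral_Iic_add_Ioi (b := (0:ℝ))
    aux_int_h.integrableOn aux_int_h.integrableOn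
  rw [← this, hIoi, hIic]; ring

lemma aux_integral_sq_exp :
    ∫ x : ℝ, x ^ 2 * Real.exp (-(1/2) * x ^ 2) = Real.sqrt (2 * Real.pi) := by
  have h0 := aux_integral_h_zero
  have hsub : ∫ x : ℝ, (x ^ 2 - 1) * Real.exp (-(1/2) * x ^ 2)
      = (∫ x : ℝ, x ^ 2 * Real.exp (-(1/2) * x ^ 2)) - ∫ x : ℝ, Real.exp (-(1/2) * x ^ 2) := by
    rw [← integral_sub aux_int_sq aux_int_exp]
    congr 1; funext x; ring
  have hg : ∫ x : ℝ, Real.exp (-(1/2) * x ^ 2) = Real.sqrt (2 * Real.pi) := by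
    rw [integral_gaussian]
    congr 1
    rw [div_div_eq_mul_div, div_one]
    ring
  rw [hsub, hg] at h0
  linarith

lemma aux_pdf_eq (x : ℝ) :
    gaussianPDFReal 0 1 x = (Real.sqrt (2 * Real.pi))⁻¹ * Real.exp (-(1/2) * x ^ 2) := by
  rw [gaussianPDFReal]
  simp only [NNReal.coe_one, mul_one, sub_zero]
  congr 1
  ring

lemma aux_gaussianReal_eq :
    gaussianReal 0 1
      = MeasureTheory.Measure.withDensity ℙ
        (fun x => ((Real.toNNReal (gaussianPDFReal 0 1 x) : ℝ≥0) : ℝ≥0∞)) := by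
  rw [gaussianReal_of_var_ne_zero 0 one_ne_zero]
  rfl

lemma aux_integral_withDensity (g : ℝ → ℝ) :
    ∫ x, g x ∂(gaussianReal 0 1) = ∫ x, gaussianPDFReal 0 1 x * g x := by
  rw [aux_gaussianReal_eq,
    integral_withDensity_eq_integral_smul (measurable_gaussianPDFReal 0 1).real_toNNReal g]
  congr 1
  funext x
  rw [NNReal.smul_def, Real.coe_toNNReal _ (gaussianPDFReal_nonneg 0 1 x), smul_eq_mul]

lemma aux_second_moment : ∫ x : ℝ, x ^ 2 ∂(gaussianReal 0 1) = 1 := by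
  rw [aux_integral_withDensity]
  have : ∀ x : ℝ, gaussianPDFReal 0 1 x * x ^ 2
      = (Real.sqrt (2 * Real.pi))⁻¹ * (x ^ 2 * Real.exp (-(1/2) * x ^ 2)) := by
    intro x; rw [aux_pdf_eq]; ring
  simp_rw [this]
  rw [integral_const_mul, aux_integral_sq_exp]
  rw [inv_mul_cancel₀]
  positivity

lemma aux_integrable_sq_gauss : Integrable (fun x : ℝ => x ^ 2) (gaussianReal 0 1) := by
  rw [aux_gaussianReal_eq,
    integrable_withDensity_iff_integrable_smul (measurable_gaussianPDFReal 0 1).real_toNNReal]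
  have := aux_int_sq.const_mul (Real.sqrt (2 * Real.pi))⁻¹
  refine this.congr (Filter.Eventually.of_forall fun x => ?_)
  simp only [NNReal.smul_def, smul_eq_mul]
  rw [Real.coe_toNNReal _ (gaussianPDFReal_nonneg 0 1 x), aux_pdf_eq]
  ring

lemma aux_map_eval (n : ℕ) (i : Fin n) :
    (Measure.pi fun _ : Fin n => gaussianReal 0 1).map (fun y => y i) = gaussianReal 0 1 := by
  apply Measure.ext
  intro s hs
  rw [Measure.map_apply (measurable_pi_apply i) hs]
  have hset : (fun y : Fin n → ℝ => y i) ⁻¹' s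
      = Set.pi Set.univ (Function.update (fun _ : Fin n => (Set.univ : Set ℝ)) i s) := by
    ext y
    simp only [Set.mem_preimage, Set.mem_pi, Set.mem_univ, forall_true_left]
    constructor
    · intro h j
      rcases eq_or_ne j i with rfl | hj
      · simpa using h
      · simp [Function.update_of_ne hj]
    · intro h
      have := h i
      simpa using this
  rw [hset, Measure.pi_pi]
  rw [Finset.prod_eq_single i (fun j _ hj => by simp [Function.update_of_ne hj])
    (fun h => absurd (Finset.mem_univ i) h)]
  simp

lemma aux_pi_integrable_sq (n : ℕ) (i : Fin n) :
    Integrable (fun y : Fin n → ℝ => (y i) ^ 2)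
      (Measure.pi fun _ : Fin n => gaussianReal 0 1) := by
  have h := aux_map_eval n i
  have hint := aux_integrable_sq_gauss
  rw [← h] at hint
  exact (integrable_map_measure hint.aestronglyMeasurable
    (measurable_pi_apply i).aemeasurable).mp hint

lemma aux_pi_integral_sq (n : ℕ) (i : Fin n) :
    ∫ y, (y i) ^ 2 ∂(Measure.pi fun _ : Fin n => gaussianReal 0 1) = 1 := by
  have h := aux_map_eval n i
  have hmeas : AEStronglyMeasurable (fun x : ℝ => x ^ 2)
      ((Measure.pi fun _ : Fin n => gaussianReal 0 1).map (fun y => y i)) := by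
    rw [h]; exact aux_integrable_sq_gauss.aestronglyMeasurable
  have := integral_map (μ := Measure.pi fun _ : Fin n => gaussianReal 0 1)
    (measurable_pi_apply i).aemeasurable hmeas
  rw [h] at this
  rw [← this, aux_second_moment]

/-- The standard Gaussian measure on `EuclideanSpace ℝ (Fin n)`, i.e. the `n`-fold
product of the standard real Gaussian `N(0,1)`. -/
noncomputable def stdGaussian (n : ℕ) : Measure (EuclideanSpace ℝ (Fin n)) :=
  (Measure.pi fun _ : Fin n => gaussianReal 0 1).map
    (MeasurableEquiv.toLp 2 (Fin n → ℝ))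

/-- The Gaussian smoothing `f_μ` of `f : ℝⁿ → ℝ`. -/
noncomputable def gaussianSmoothing (n : ℕ) (μ : ℝ) (f : EuclideanSpace ℝ (Fin n) → ℝ)
    (x : EuclideanSpace ℝ (Fin n)) : ℝ :=
  ∫ u, f (x + μ • u) ∂(stdGaussian n)

instance (n : ℕ) : IsProbabilityMeasure (stdGaussian n) :=
  Measure.isProbabilityMeasure_map
    (MeasurableEquiv.toLp 2 (Fin n → ℝ)).measurable.aemeasurable

lemma aux_norm_symm (n : ℕ) (y : Fin n → ℝ) :
    ‖(MeasurableEquiv.toLp 2 (Fin n → ℝ)) y‖ ^ 2 = ∑ i, (y i) ^ 2 := by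
  rw [MeasurableEquiv.toLp_apply]
  rw [EuclideanSpace.norm_eq]
  rw [Real.sq_sqrt (by positivity)]
  congr 1
  funext i
  rw [PiLp.toLp_apply]
  rw [Real.norm_eq_abs, sq_abs]

lemma aux_std_integrable_normsq (n : ℕ) :
    Integrable (fun u => ‖u‖ ^ 2) (stdGaussian n) := by
  rw [_root_.stdGaussian]
  rw [integrable_map_measure
    (by exact (continuous_norm.pow 2).aestronglyMeasurable)
    (MeasurableEquiv.toLp 2 (Fin n → ℝ)).measurable.aemeasurable]
  have : ((fun u : EuclideanSpace ℝ (Fin n) => ‖u‖ ^ 2)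
      ∘ (MeasurableEquiv.toLp 2 (Fin n → ℝ)))
      = fun y : Fin n → ℝ => ∑ i, (y i) ^ 2 := by
    funext y
    exact aux_norm_symm n y
  rw [this]
  exact integrable_finset_sum _ (fun i _ => aux_pi_integrable_sq n i)

lemma aux_std_integral_normsq (n : ℕ) :
    ∫ u, ‖u‖ ^ 2 ∂(stdGaussian n) = n := by
  rw [_root_.stdGaussian,
    integral_map (MeasurableEquiv.toLp 2 (Fin n → ℝ)).measurable.aemeasurable
      (by exact (continuous_norm.pow 2).aestronglyMeasurable)]
  simp_rw [aux_norm_symm]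
  rw [integral_finset_sum _ (fun i _ => aux_pi_integrable_sq n i)]
  simp [aux_pi_integral_sq]

lemma aux_std_memL2_norm (n : ℕ) :
    MemLp (fun u : EuclideanSpace ℝ (Fin n) => ‖u‖) 2 (stdGaussian n) := by
  refine (memLp_two_iff_integrable_sq ?_).mpr ?_
  · exact continuous_norm.aestronglyMeasurable
  · exact aux_std_integrable_normsq n

lemma aux_std_integrable_norm (n : ℕ) :
    Integrable (fun u : EuclideanSpace ℝ (Fin n) => ‖u‖) (stdGaussian n) :=
  (aux_std_memL2_norm n).integrable (by norm_num)

lemma aux_std_integral_norm_le (n : ℕ) :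
    ∫ u, ‖u‖ ∂(stdGaussian n) ≤ Real.sqrt n := by
  have hmem := aux_std_memL2_norm n
  have hvar := variance_nonneg (fun u : EuclideanSpace ℝ (Fin n) => ‖u‖) (stdGaussian n)
  rw [variance_eq_sub hmem] at hvar
  simp only [Pi.pow_apply] at hvar
  have hsq : (∫ u, ‖u‖ ∂(stdGaussian n)) ^ 2 ≤ (n : ℝ) := by
    have h2 : ∫ u, (fun u : EuclideanSpace ℝ (Fin n) => ‖u‖) u ^ 2 ∂(stdGaussian n) = n := by
      simpa using aux_std_integral_normsq n
    nlinarith [hvar, h2]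
  have h0 : 0 ≤ ∫ u, ‖u‖ ∂(stdGaussian n) := integral_nonneg (fun u => norm_nonneg u)
  nlinarith [Real.sq_sqrt (show (0:ℝ) ≤ n by positivity),
    Real.sqrt_nonneg (n : ℝ)]

theorem stmt_9 (n : ℕ) (hn : 1 ≤ n) (μ L : ℝ) (hμ : 0 < μ) (hL : 0 ≤ L)
    (f : EuclideanSpace ℝ (Fin n) → ℝ)
    (hlip : ∀ x y : EuclideanSpace ℝ (Fin n), |f x - f y| ≤ L * ‖x - y‖) :
    ∀ x : EuclideanSpace ℝ (Fin n),
      |gaussianSmoothing n μ f x - f x| ≤ μ * L * Real.sqrt n := by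
  intro x
  have hfc : Continuous f := by
    have hlw : LipschitzWith (Real.toNNReal L) f := by
      apply LipschitzWith.of_dist_le_mul
      intro a b
      rw [Real.dist_eq, dist_eq_norm, Real.coe_toNNReal _ hL]
      exact hlip a b
    exact hlw.continuous
  have hint_norm := aux_std_integrable_norm n
  have key : ∀ u : EuclideanSpace ℝ (Fin n), |f (x + μ • u) - f x| ≤ μ * L * ‖u‖ := by
    intro u
    have h := hlip (x + μ • u) x
    have hname : ‖x + μ • u - x‖ = μ * ‖u‖ := by
      rw [add_sub_cancel_left, norm_smul, Real.norm_eq_abs, abs_of_pos hμ]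
    rw [hname] at h
    calc |f (x + μ • u) - f x| ≤ L * (μ * ‖u‖) := h
      _ = μ * L * ‖u‖ := by ring
  have hmeasg : AEStronglyMeasurable (fun u : EuclideanSpace ℝ (Fin n) =>
      f (x + μ • u) - f x) (stdGaussian n) := by
    apply Continuous.aestronglyMeasurable
    exact (hfc.comp (continuous_const.add (continuous_id.const_smul μ))).sub continuous_const
  have hintg : Integrable (fun u : EuclideanSpace ℝ (Fin n) => f (x + μ • u) - f x)
      (stdGaussian n) := by
    refine Integrable.mono' (hint_norm.const_mul (μ * L)) hmeasg ?_
    filter_upwards with u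
    rw [Real.norm_eq_abs]
    exact key u
  have hint1 : Integrable (fun u : EuclideanSpace ℝ (Fin n) => f (x + μ • u)) (stdGaussian n) := by
    have := hintg.add (integrable_const (f x))
    refine this.congr (Filter.Eventually.of_forall fun u => by simp)
  have hrw : gaussianSmoothing n μ f x - f x
      = ∫ u, (f (x + μ • u) - f x) ∂(stdGaussian n) := by
    rw [gaussianSmoothing, integral_sub hint1 (integrable_const _)]
    simp
  rw [hrw]
  calc |∫ u, (f (x + μ • u) - f x) ∂(stdGaussian n)|
      ≤ ∫ u, |f (x + μ • u) - f x| ∂(stdGaussian n) := by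
        simpa [Real.norm_eq_abs] using
          norm_integral_le_integral_norm (μ := stdGaussian n)
            (fun u : EuclideanSpace ℝ (Fin n) => f (x + μ • u) - f x)
    _ ≤ ∫ u, μ * L * ‖u‖ ∂(stdGaussian n) := by
        refine integral_mono hintg.abs (hint_norm.const_mul _) (fun u => key u)
    _ = μ * L * ∫ u, ‖u‖ ∂(stdGaussian n) := by rw [integral_const_mul]
    _ ≤ μ * L * Real.sqrt n := by
        apply mul_le_mul_of_nonneg_left (aux_std_integral_norm_le n)
        positivity
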